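/- arXiv:1408.1023 — 2 statements merged into one kernel-verified Lean document; each statement's English description precedes it below -/
import Mathlib

section
/- If the hash function h is injective (modelling collision resistance), then verification of a Merkle authentication path is sound: if two leaves d and d' both verify against the same root digest with authentication paths describing the same position (same sequence of left/right directions), then d = d'. -/
/-- Verify a Merkle authentication path: start from the leaf hash and combine
with each sibling, on the left (`dir = true`) or right (`dir = false`). -/
def verifyPath {Data H : Type*} (hl : Data → H) (h : H → H → H)
    (leaf : Data) (path : List (Bool × H)) : H :=
  path.foldl (fun acc p => if p.1 then h p.2 acc else h acc p.2) (hl leaf)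

lemma merkle_fold_inj {H : Type*} (h : H → H → H)
    (hh : Function.Injective (fun p : H × H => h p.1 p.2)) :
    ∀ (path path' : List (Bool × H)) (a b : H),
      path.map Prod.fst = path'.map Prod.fst →
      path.foldl (fun acc p => if p.1 then h p.2 acc else h acc p.2) a =
      path'.foldl (fun acc p => if p.1 then h p.2 acc else h acc p.2) b → a = b := by
  intro path
  induction path with
  | nil =>
    intro path' a b hdir hv
    cases path' with
    | nil => exact hv
    | cons _ _ => simp at hdir
  | cons p ps ih =>
    intro path' a b hdir hv
    cases path' with
    | nil => simp at hdir
    | cons q qs =>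
      simp only [List.map_cons, List.cons.injEq] at hdir
      obtain ⟨hd, ht⟩ := hdir
      simp only [List.foldl_cons] at hv
      have := ih qs _ _ ht hv
      cases hp : p.1 <;> rw [hp] at this <;> rw [← hd, hp] at this <;> simp only [if_true, if_false, Bool.false_eq_true] at this
      · have h2 := hh (show (fun p : H × H => h p.1 p.2) (a, p.2) = (fun p : H × H => h p.1 p.2) (b, q.2) from this)
        exact congrArg Prod.fst h2
      · have h2 := hh (show (fun p : H × H => h p.1 p.2) (p.2, a) = (fun p : H × H => h p.1 p.2) (q.2, b) from this)
        exact congrArg Prod.snd h2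

/-- Soundness of Merkle authentication-path verification: with injective hash
functions, two leaves verifying against the same root along paths with the
same left/right directions must be equal. -/
theorem merkle_verify_sound {Data H : Type*} (hl : Data → H) (h : H → H → H)
    (hhl : Function.Injective hl)
    (hh : Function.Injective (fun p : H × H => h p.1 p.2))
    (d d' : Data) (path path' : List (Bool × H)) (root : H)
    (hdir : path.map Prod.fst = path'.map Prod.fst)
    (hv : verifyPath hl h d path = root)
    (hv' : verifyPath hl h d' path' = root) : d = d' := by
  apply hhl
  exact merkle_fold_inj h hh path path' _ _ hdir (hv.trans hv'.symm)
end

section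
/- If the hash combiner and leaf hash are injective, then the root digest of a Merkle tree uniquely determines the sequence of leaves: two balanced Merkle trees (built by the same deterministic splitting rule) over leaf lists L1 and L2 with equal root hashes satisfy L1 = L2. -/
variable {Data H : Type*}

/-- The root hash of the balanced Merkle tree over a list of data: a singleton
is hashed by the leaf hash `hl`; a longer list is split into its first
`⌈N/2⌉` elements and the rest and the two roots are combined by `h`. -/
def mroot [Inhabited H] (hl : Data → H) (h : H → H → H) : List Data → H
  | [] => default
  | [d] => hl d
  | a :: b :: rest =>
      h (mroot hl h ((a :: b :: rest).take (((a :: b :: rest).length + 1) / 2)))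
        (mroot hl h ((a :: b :: rest).drop (((a :: b :: rest).length + 1) / 2)))
termination_by l => l.length
decreasing_by
  all_goals simp [List.length_take, List.length_drop]; omega

private lemma merkle_aux [Inhabited H]
    (hl : Data → H) (h : H → H → H)
    (hhl : Function.Injective hl)
    (hh : Function.Injective (fun p : H × H => h p.1 p.2))
    (hdisj : ∀ x y d, h x y ≠ hl d) :
    ∀ n (L₁ L₂ : List Data), L₁.length + L₂.length ≤ n → L₁ ≠ [] → L₂ ≠ [] →
      mroot hl h L₁ = mroot hl h L₂ → L₁ = L₂ := by
  intro n
  induction n with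
  | zero => intro L₁ L₂ hlen h₁ _ _; simp at hlen; exact absurd hlen.1 (by simpa using h₁)
  | succ n ih =>
    intro L₁ L₂ hlen h₁ h₂ hroot
    match L₁, L₂ with
    | [], _ => exact absurd rfl h₁
    | _, [] => exact absurd rfl h₂
    | [d], [e] =>
      simp only [mroot] at hroot
      rw [hhl hroot]
    | [d], a :: b :: r =>
      simp only [mroot] at hroot
      exact absurd hroot.symm (hdisj _ _ _)
    | a :: b :: r, [e] =>
      simp only [mroot] at hroot
      exact absurd hroot (hdisj _ _ _)
    | a :: b :: r, c :: e :: s =>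
      simp only [mroot] at hroot
      have hpair := hh (a₁ := (_, _)) (a₂ := (_, _)) hroot
      rw [Prod.mk.injEq] at hpair
      set l1 : List Data := a :: b :: r with hL1
      set l2 : List Data := c :: e :: s with hL2
      set k₁ := (l1.length + 1) / 2 with hk₁
      set k₂ := (l2.length + 1) / 2 with hk₂
      have hlen1 : 2 ≤ l1.length := by simp [hL1]
      have hlen2 : 2 ≤ l2.length := by simp [hL2]
      have htake_ne₁ : l1.take k₁ ≠ [] := by
        simp [List.take_eq_nil_iff]; omega
      have htake_ne₂ : l2.take k₂ ≠ [] := by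
        simp [List.take_eq_nil_iff]; omega
      have hdrop_ne₁ : l1.drop k₁ ≠ [] := by
        rw [← List.length_pos_iff_ne_nil, List.length_drop]; omega
      have hdrop_ne₂ : l2.drop k₂ ≠ [] := by
        rw [← List.length_pos_iff_ne_nil, List.length_drop]; omega
      have hbt : (l1.take k₁).length + (l2.take k₂).length ≤ n := by
        simp only [List.length_take]
        omega
      have hbd : (l1.drop k₁).length + (l2.drop k₂).length ≤ n := by
        simp only [List.length_drop]
        omega
      have heqt := ih _ _ hbt htake_ne₁ htake_ne₂ hpair.1
      have heqd := ih _ _ hbd hdrop_ne₁ hdrop_ne₂ hpair.2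
      have hlt : (l1.take k₁).length = (l2.take k₂).length := by rw [heqt]
      have hld : (l1.drop k₁).length = (l2.drop k₂).length := by rw [heqd]
      simp only [List.length_take, List.length_drop] at hlt hld
      have hkk : k₁ = k₂ := by omega
      calc l1 = l1.take k₁ ++ l1.drop k₁ := (List.take_append_drop _ _).symm
        _ = l2.take k₂ ++ l2.drop k₂ := by rw [heqt, heqd]
        _ = l2 := List.take_append_drop _ _

/-- With injective combiner and leaf hash of disjoint ranges, the Merkle root
uniquely determines the sequence of leaves. -/
theorem merkle_root_determines_leaves [Inhabited H]
    (hl : Data → H) (h : H → H → H)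
    (hhl : Function.Injective hl)
    (hh : Function.Injective (fun p : H × H => h p.1 p.2))
    (hdisj : ∀ x y d, h x y ≠ hl d)
    (L₁ L₂ : List Data) (h₁ : L₁ ≠ []) (h₂ : L₂ ≠ [])
    (hroot : mroot hl h L₁ = mroot hl h L₂) : L₁ = L₂ := by
  exact merkle_aux hl h hhl hh hdisj (L₁.length + L₂.length) L₁ L₂ le_rfl h₁ h₂ hroot
end
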